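/- Let 𝔤 be a finite-dimensional real 2-step nilpotent Lie algebra and let u, v ∈ L¹([0,1],𝔤) satisfy ∫₀¹ v(t) dt = 0 and ∫₀¹ ⁅∫₀ᵗ u(s) ds, v(t)⁆ dt = 0. Then E(u+v) = E(u) + E(v), where E is the endpoint functional. -/

import Mathlib

/-!
Write `U, V` for the primitives of `u, v`. Bilinearity gives
`E(u+v) = E(u) + E(v) + ½ (∫⁅U,v⁆ + ∫⁅V,u⁆)`. Integration by parts, proved by splitting the
unit square along its diagonal and applying Fubini, gives `∫⁅U,v⁆ + ∫⁅u,V⁆ = ⁅U(1),V(1)⁆`, which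
vanishes since `V(1) = 0`. By antisymmetry `∫⁅V,u⁆ = -∫⁅u,V⁆ = ∫⁅U,v⁆`, which is `0` by hypothesis.
-/

open MeasureTheory

/-- The endpoint of the horizontal curve with control `u` in the 2-step model group `(𝔤,∗)`. -/
noncomputable def endpointMap {L : Type*} [NormedAddCommGroup L] [NormedSpace ℝ L]
    (bracket : L →ₗ[ℝ] L →ₗ[ℝ] L) (u : ℝ → L) : L :=
  (∫ t in (0:ℝ)..1, u t) +
    (2⁻¹ : ℝ) • ∫ t in (0:ℝ)..1, bracket (∫ s in (0:ℝ)..t, u s) (u t)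

open Set

section BilinearPrimitive

variable {E F G : Type*} [NormedAddCommGroup E] [NormedSpace ℝ E] [NormedAddCommGroup F]
  [NormedSpace ℝ F] [NormedAddCommGroup G] [NormedSpace ℝ G]

theorem IntervalIntegrable.bilinear_primitive (B : E →L[ℝ] F →L[ℝ] G) {f : ℝ → E} {g : ℝ → F}
    {a b : ℝ} (hf : IntervalIntegrable f volume a b) (hg : IntervalIntegrable g volume a b) :
    IntervalIntegrable (fun t => B (∫ s in a..t, f s) (g t)) volume a b := by
  have hcont := intervalIntegral.continuousOn_primitive_interval' hf left_mem_uIcc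
  obtain ⟨C, hC⟩ := isCompact_uIcc.exists_bound_of_continuousOn hcont
  rw [intervalIntegrable_iff] at hg ⊢
  refine B.integrable_of_bilin_of_bdd_left C ?_ ?_ hg
  · exact (hcont.mono uIoc_subset_uIcc).aestronglyMeasurable measurableSet_uIoc
  · exact ae_restrict_of_forall_mem measurableSet_uIoc fun t ht => hC t (uIoc_subset_uIcc ht)

theorem setIntegral_Iic_inter_Ioc {h : ℝ → E} {a b t : ℝ} (ht : t ∈ Ioc a b) :
    ∫ s in Iic t ∩ Ioc a b, h s = ∫ s in a..t, h s := by
  rw [inter_comm, Ioc_inter_Iic, inf_eq_right.mpr ht.2, intervalIntegral.integral_of_le ht.1.le]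

theorem setIntegral_Iio_inter_Ioc {h : ℝ → E} {a b t : ℝ} (ht : t ∈ Ioc a b) :
    ∫ s in Iio t ∩ Ioc a b, h s = ∫ s in a..t, h s := by
  have hae : (Iio t ∩ Ioc a b : Set ℝ) =ᵐ[volume] (Iic t ∩ Ioc a b : Set ℝ) :=
    Iio_ae_eq_Iic.inter .rfl
  rw [setIntegral_congr_set hae, setIntegral_Iic_inter_Ioc ht]

variable [CompleteSpace G] (B : E →L[ℝ] F →L[ℝ] G) {f : ℝ → E} {g : ℝ → F}
  {a b : ℝ}

theorem integral_prod_indicator_fst_le_snd [CompleteSpace E] (hab : a ≤ b)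
    (hf : IntervalIntegrable f volume a b)
    (hF : Integrable (fun p : ℝ × ℝ => B (f p.1) (g p.2))
      ((volume.restrict (Ioc a b)).prod (volume.restrict (Ioc a b)))) :
    ∫ p, {p : ℝ × ℝ | p.1 ≤ p.2}.indicator (fun p => B (f p.1) (g p.2)) p
        ∂(volume.restrict (Ioc a b)).prod (volume.restrict (Ioc a b)) =
      ∫ t in a..b, B (∫ s in a..t, f s) (g t) := by
  rw [integral_prod_symm _ (hF.indicator (measurableSet_le measurable_fst measurable_snd)),
    intervalIntegral.integral_of_le hab]
  refine integral_congr_ae (ae_restrict_of_forall_mem measurableSet_Ioc fun t ht => ?_)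
  change ∫ s in Ioc a b, (Iic t).indicator (fun s => B (f s) (g t)) s = _
  rw [integral_indicator measurableSet_Iic, Measure.restrict_restrict measurableSet_Iic,
    setIntegral_Iic_inter_Ioc ht]
  exact (B.flip (g t)).intervalIntegral_comp_comm
    (hf.mono_set (uIcc_subset_uIcc_left (uIcc_of_le hab ▸ Ioc_subset_Icc_self ht)))

theorem integral_prod_indicator_snd_lt_fst [CompleteSpace F] (hab : a ≤ b)
    (hg : IntervalIntegrable g volume a b)
    (hF : Integrable (fun p : ℝ × ℝ => B (f p.1) (g p.2))
      ((volume.restrict (Ioc a b)).prod (volume.restrict (Ioc a b)))) :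
    ∫ p, {p : ℝ × ℝ | p.2 < p.1}.indicator (fun p => B (f p.1) (g p.2)) p
        ∂(volume.restrict (Ioc a b)).prod (volume.restrict (Ioc a b)) =
      ∫ s in a..b, B (f s) (∫ t in a..s, g t) := by
  rw [integral_prod _ (hF.indicator (measurableSet_lt measurable_snd measurable_fst)),
    intervalIntegral.integral_of_le hab]
  refine integral_congr_ae (ae_restrict_of_forall_mem measurableSet_Ioc fun s hs => ?_)
  change ∫ t in Ioc a b, (Iio s).indicator (fun t => B (f s) (g t)) t = _
  rw [integral_indicator measurableSet_Iio, Measure.restrict_restrict measurableSet_Iio,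
    setIntegral_Iio_inter_Ioc hs]
  exact (B (f s)).intervalIntegral_comp_comm
    (hg.mono_set (uIcc_subset_uIcc_left (uIcc_of_le hab ▸ Ioc_subset_Icc_self hs)))

theorem integral_bilinear_primitive_add [CompleteSpace E] [CompleteSpace F] (hab : a ≤ b)
    (hf : IntervalIntegrable f volume a b) (hg : IntervalIntegrable g volume a b) :
    (∫ t in a..b, B (∫ s in a..t, f s) (g t)) + ∫ t in a..b, B (f t) (∫ s in a..t, g s) =
      B (∫ t in a..b, f t) (∫ t in a..b, g t) := by
  have hF : Integrable (fun p : ℝ × ℝ => B (f p.1) (g p.2))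
      ((volume.restrict (Ioc a b)).prod (volume.restrict (Ioc a b))) :=
    hf.1.op_fst_snd B.continuous₂ ⟨‖B‖, B.le_opNorm₂⟩ hg.1
  have hcompl : {p : ℝ × ℝ | p.2 < p.1} = {p : ℝ × ℝ | p.1 ≤ p.2}ᶜ := by
    ext p
    simp
  have hlower := hF.indicator (measurableSet_le measurable_fst measurable_snd)
  have hupper := hF.indicator (measurableSet_lt measurable_snd measurable_fst)
  rw [← integral_prod_indicator_fst_le_snd B hab hf hF,
    ← integral_prod_indicator_snd_lt_fst B hab hg hF, ← integral_add hlower hupper, hcompl]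
  simp only [indicator_self_add_compl_apply]
  rw [integral_prod_bilin B hf.1 hg.1, intervalIntegral.integral_of_le hab,
    intervalIntegral.integral_of_le hab]

end BilinearPrimitive

theorem LinearMap.IsAlt.integral_primitive_swap {E G : Type*} [NormedAddCommGroup E]
    [NormedSpace ℝ E] [FiniteDimensional ℝ E] [NormedAddCommGroup G] [NormedSpace ℝ G]
    [CompleteSpace G] {bracket : E →ₗ[ℝ] E →ₗ[ℝ] G} (halt : bracket.IsAlt) {u v : ℝ → E}
    {a b : ℝ} (hab : a ≤ b) (hu : IntervalIntegrable u volume a b)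
    (hv : IntervalIntegrable v volume a b) (hv0 : ∫ t in a..b, v t = 0) :
    ∫ t in a..b, bracket (∫ s in a..t, v s) (u t) =
      ∫ t in a..b, bracket (∫ s in a..t, u s) (v t) := by
  have hparts := integral_bilinear_primitive_add bracket.toContinuousBilinearMap hab hu hv
  simp only [hv0, map_zero, LinearMap.toContinuousBilinearMap_apply] at hparts
  calc ∫ t in a..b, bracket (∫ s in a..t, v s) (u t)
      = ∫ t in a..b, -bracket (u t) (∫ s in a..t, v s) :=
        intervalIntegral.integral_congr fun t _ => (halt.neg _ _).symm
    _ = ∫ t in a..b, bracket (∫ s in a..t, u s) (v t) := by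
        rw [intervalIntegral.integral_neg, ← eq_neg_of_add_eq_zero_left hparts]

theorem endpointMap_add {L : Type*} [NormedAddCommGroup L] [NormedSpace ℝ L]
    [FiniteDimensional ℝ L] (bracket : L →ₗ[ℝ] L →ₗ[ℝ] L) {u v : ℝ → L}
    (hu : IntervalIntegrable u volume 0 1) (hv : IntervalIntegrable v volume 0 1) :
    endpointMap bracket (fun t => u t + v t) =
      endpointMap bracket u + endpointMap bracket v +
        (2⁻¹ : ℝ) • ((∫ t in (0:ℝ)..1, bracket (∫ s in (0:ℝ)..t, u s) (v t)) +
          ∫ t in (0:ℝ)..1, bracket (∫ s in (0:ℝ)..t, v s) (u t)) := by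
  have hint {f g : ℝ → L} (hf : IntervalIntegrable f volume 0 1)
      (hg : IntervalIntegrable g volume 0 1) :
      IntervalIntegrable (fun t => bracket (∫ s in (0:ℝ)..t, f s) (g t)) volume 0 1 :=
    hf.bilinear_primitive bracket.toContinuousBilinearMap hg
  have hprim : ∀ t ∈ uIcc (0:ℝ) 1,
      ∫ s in (0:ℝ)..t, (u s + v s) = (∫ s in (0:ℝ)..t, u s) + ∫ s in (0:ℝ)..t, v s :=
    fun t ht => intervalIntegral.integral_add (hu.mono_set (uIcc_subset_uIcc_left ht))
      (hv.mono_set (uIcc_subset_uIcc_left ht))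
  have hsplit : ∫ t in (0:ℝ)..1, bracket (∫ s in (0:ℝ)..t, (u s + v s)) (u t + v t) =
      ∫ t in (0:ℝ)..1, (bracket (∫ s in (0:ℝ)..t, u s) (u t) +
          bracket (∫ s in (0:ℝ)..t, u s) (v t)) +
        (bracket (∫ s in (0:ℝ)..t, v s) (u t) + bracket (∫ s in (0:ℝ)..t, v s) (v t)) :=
    intervalIntegral.integral_congr fun t ht => by
      simp only [hprim t ht, map_add, LinearMap.add_apply]
      abel
  simp only [endpointMap]
  rw [intervalIntegral.integral_add hu hv, hsplit, intervalIntegral.integral_add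
    ((hint hu hu).add (hint hu hv)) ((hint hv hu).add (hint hv hv)),
    intervalIntegral.integral_add (hint hu hu) (hint hu hv),
    intervalIntegral.integral_add (hint hv hu) (hint hv hv)]
  simp only [smul_add]
  abel

theorem stmt_1 {L : Type*} [NormedAddCommGroup L] [NormedSpace ℝ L] [FiniteDimensional ℝ L]
    (bracket : L →ₗ[ℝ] L →ₗ[ℝ] L)
    (halt : ∀ x : L, bracket x x = 0)
    (u v : ℝ → L)
    (hu : IntervalIntegrable u volume 0 1)
    (hv : IntervalIntegrable v volume 0 1)
    (hv0 : (∫ t in (0:ℝ)..1, v t) = 0)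
    (huv : (∫ t in (0:ℝ)..1, bracket (∫ s in (0:ℝ)..t, u s) (v t)) = 0) :
    endpointMap bracket (fun t => u t + v t) =
      endpointMap bracket u + endpointMap bracket v := by
  rw [endpointMap_add bracket hu hv,
    LinearMap.IsAlt.integral_primitive_swap halt zero_le_one hu hv hv0, huv, add_zero, smul_zero,
    add_zero]
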